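/- Let α, β > 0, p₁, p₂ ∈ (0,1], x > 0, and let f, g, v₁, v₂, w₁, w₂ be positive integrable functions on [0,x] with 0 < v₁ ≤ f ≤ v₂ and 0 < w₁ ≤ g ≤ w₂ pointwise. Then I^{α,p₁}[f²](x) · I^{β,p₂}[g²](x) ≤ I^{α,p₁}[(v₂/w₁)·fg](x) · I^{β,p₂}[(w₂/v₁)·fg](x). -/
import Mathlib


open MeasureTheory

/-- Kernel of the generalized proportional fractional (GPF) integral. -/
noncomputable def gpfKernel (α p x τ : ℝ) : ℝ :=
  Real.exp (((p - 1) / p) * (x - τ)) * (x - τ) ^ (α - 1)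

/-- Generalized proportional fractional integral
`I^{α,p}[h](x) = (1/(p^α Γ(α))) ∫₀ˣ e^{((p-1)/p)(x-τ)} (x-τ)^{α-1} h(τ) dτ`. -/
noncomputable def gpf (α p x : ℝ) (h : ℝ → ℝ) : ℝ :=
  (1 / (p ^ α * Real.Gamma α)) * ∫ τ in (0:ℝ)..x, gpfKernel α p x τ * h τ

/-- Integrability of the GPF integrand. -/
def GpfIntegrable (α p x : ℝ) (h : ℝ → ℝ) : Prop :=
  IntervalIntegrable (fun τ => gpfKernel α p x τ * h τ) volume 0 x

lemma gpfKernel_nonneg {α p x τ : ℝ} (h : τ ≤ x) : 0 ≤ gpfKernel α p x τ :=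
  mul_nonneg (Real.exp_pos _).le (Real.rpow_nonneg (by linarith) _)

lemma gpf_mono {α p x : ℝ} (hα : 0 < α) (hp : 0 < p) (hx : 0 ≤ x) {h₁ h₂ : ℝ → ℝ}
    (hle : ∀ τ ∈ Set.Icc (0:ℝ) x, h₁ τ ≤ h₂ τ)
    (hi₁ : GpfIntegrable α p x h₁) (hi₂ : GpfIntegrable α p x h₂) :
    gpf α p x h₁ ≤ gpf α p x h₂ := by
  unfold gpf
  have hc : 0 ≤ 1 / (p ^ α * Real.Gamma α) := by
    have := Real.Gamma_pos_of_pos hα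
    positivity
  refine mul_le_mul_of_nonneg_left ?_ hc
  refine intervalIntegral.integral_mono_on hx hi₁ hi₂ ?_
  intro τ hτ
  exact mul_le_mul_of_nonneg_left (hle τ hτ) (gpfKernel_nonneg hτ.2)

lemma gpf_nonneg {α p x : ℝ} (hα : 0 < α) (hp : 0 < p) (hx : 0 ≤ x) {h : ℝ → ℝ}
    (hh : ∀ τ ∈ Set.Icc (0:ℝ) x, 0 ≤ h τ) : 0 ≤ gpf α p x h := by
  unfold gpf
  have hc : 0 ≤ 1 / (p ^ α * Real.Gamma α) := by
    have := Real.Gamma_pos_of_pos hα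
    positivity
  refine mul_nonneg hc ?_
  refine intervalIntegral.integral_nonneg hx ?_
  intro τ hτ
  exact mul_nonneg (gpfKernel_nonneg hτ.2) (hh τ hτ)

theorem gpf_product_bound
    (α β p₁ p₂ x : ℝ) (hα : 0 < α) (hβ : 0 < β)
    (hp₁ : p₁ ∈ Set.Ioc (0:ℝ) 1) (hp₂ : p₂ ∈ Set.Ioc (0:ℝ) 1) (hx : 0 < x)
    (f g v₁ v₂ w₁ w₂ : ℝ → ℝ)
    (hfb : ∀ τ ∈ Set.Icc (0:ℝ) x, 0 < v₁ τ ∧ v₁ τ ≤ f τ ∧ f τ ≤ v₂ τ)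
    (hgb : ∀ τ ∈ Set.Icc (0:ℝ) x, 0 < w₁ τ ∧ w₁ τ ≤ g τ ∧ g τ ≤ w₂ τ)
    (h1 : GpfIntegrable α p₁ x (fun τ => f τ ^ 2))
    (h2 : GpfIntegrable β p₂ x (fun τ => g τ ^ 2))
    (h3 : GpfIntegrable α p₁ x (fun τ => v₂ τ / w₁ τ * (f τ * g τ)))
    (h4 : GpfIntegrable β p₂ x (fun τ => w₂ τ / v₁ τ * (f τ * g τ))) :
    gpf α p₁ x (fun τ => f τ ^ 2) * gpf β p₂ x (fun τ => g τ ^ 2) ≤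
      gpf α p₁ x (fun τ => v₂ τ / w₁ τ * (f τ * g τ)) *
        gpf β p₂ x (fun τ => w₂ τ / v₁ τ * (f τ * g τ)) := by
  have hA : gpf α p₁ x (fun τ => f τ ^ 2) ≤
      gpf α p₁ x (fun τ => v₂ τ / w₁ τ * (f τ * g τ)) := by
    refine gpf_mono hα hp₁.1 hx.le ?_ h1 h3
    intro τ hτ
    obtain ⟨hv₁, hv₁f, hfv₂⟩ := hfb τ hτ
    obtain ⟨hw₁, hw₁g, hgw₂⟩ := hgb τ hτ
    have hf0 : 0 < f τ := lt_of_lt_of_le hv₁ hv₁f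
    have hkey : f τ ≤ v₂ τ / w₁ τ * g τ := by
      rw [div_mul_eq_mul_div, le_div_iff₀ hw₁]
      exact mul_le_mul hfv₂ hw₁g hw₁.le (by linarith)
    calc f τ ^ 2 = f τ * f τ := sq (f τ)
      _ ≤ f τ * (v₂ τ / w₁ τ * g τ) := mul_le_mul_of_nonneg_left hkey hf0.le
      _ = v₂ τ / w₁ τ * (f τ * g τ) := by ring
  have hB : gpf β p₂ x (fun τ => g τ ^ 2) ≤
      gpf β p₂ x (fun τ => w₂ τ / v₁ τ * (f τ * g τ)) := by
    refine gpf_mono hβ hp₂.1 hx.le ?_ h2 h4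
    intro τ hτ
    obtain ⟨hv₁, hv₁f, hfv₂⟩ := hfb τ hτ
    obtain ⟨hw₁, hw₁g, hgw₂⟩ := hgb τ hτ
    have hg0 : 0 < g τ := lt_of_lt_of_le hw₁ hw₁g
    have hkey : g τ ≤ w₂ τ / v₁ τ * f τ := by
      rw [div_mul_eq_mul_div, le_div_iff₀ hv₁]
      exact mul_le_mul hgw₂ hv₁f hv₁.le (by linarith)
    calc g τ ^ 2 = g τ * g τ := sq (g τ)
      _ ≤ g τ * (w₂ τ / v₁ τ * f τ) := mul_le_mul_of_nonneg_left hkey hg0.le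
      _ = w₂ τ / v₁ τ * (f τ * g τ) := by ring
  have hBnn : 0 ≤ gpf β p₂ x (fun τ => g τ ^ 2) :=
    gpf_nonneg hβ hp₂.1 hx.le (fun τ _ => sq_nonneg _)
  have hCnn : 0 ≤ gpf α p₁ x (fun τ => v₂ τ / w₁ τ * (f τ * g τ)) := by
    refine gpf_nonneg hα hp₁.1 hx.le ?_
    intro τ hτ
    obtain ⟨hv₁, hv₁f, hfv₂⟩ := hfb τ hτ
    obtain ⟨hw₁, hw₁g, hgw₂⟩ := hgb τ hτ
    have hf0 : 0 < f τ := lt_of_lt_of_le hv₁ hv₁f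
    have hg0 : 0 < g τ := lt_of_lt_of_le hw₁ hw₁g
    have hv₂ : 0 < v₂ τ := lt_of_lt_of_le hf0 hfv₂
    positivity
  exact mul_le_mul hA hB hBnn hCnn
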